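/- In the polynomial ring ℂ[x₂,x₃,x₄], let D = −432x₂³x₃² + 36x₂²x₄² + 108x₂x₃²x₄ − 27x₃⁴ − 8x₄³ (three times the determinant of the matrix 𝒯₁). Then ℒ₀ D = 12 D, ℒ₁ D = 0, and ℒ₂ D = 0; in particular the vector fields ℒ₀, ℒ₁, ℒ₂ are tangent to the hypersurface {D = 0}. -/

import Mathlib

open MvPolynomial

noncomputable section

/-- The polynomial ring ℂ[x₂,x₃,x₄]; `X 0 = x₂`, `X 1 = x₃`, `X 2 = x₄`. -/
abbrev R3 : Type := MvPolynomial (Fin 3) ℂ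

def x2 : R3 := X 0
def x3 : R3 := X 1
def x4 : R3 := X 2

/-- ℒ₀ = 2x₂∂/∂x₂ + 3x₃∂/∂x₃ + 4x₄∂/∂x₄ -/
def L0 (P : R3) : R3 :=
  2 * x2 * pderiv (0 : Fin 3) P + 3 * x3 * pderiv (1 : Fin 3) P + 4 * x4 * pderiv (2 : Fin 3) P

/-- ℒ₁ = x₃∂/∂x₂ + x₄∂/∂x₃ + 12x₂x₃∂/∂x₄ -/
def L1 (P : R3) : R3 :=
  x3 * pderiv (0 : Fin 3) P + x4 * pderiv (1 : Fin 3) P + 12 * x2 * x3 * pderiv (2 : Fin 3) P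

/-- ℒ₂ = ((2/3)x₄ − 2x₂²)∂/∂x₂ + 3x₂x₃∂/∂x₃ + (3x₃² + 2x₂x₄)∂/∂x₄ -/
def L2 (P : R3) : R3 :=
  (C (2/3 : ℂ) * x4 - 2 * x2 ^ 2) * pderiv (0 : Fin 3) P + 3 * x2 * x3 * pderiv (1 : Fin 3) P
    + (3 * x3 ^ 2 + 2 * x2 * x4) * pderiv (2 : Fin 3) P

/-- D = 3·det 𝒯₁ -/
def D : R3 :=
  -432 * x2 ^ 3 * x3 ^ 2 + 36 * x2 ^ 2 * x4 ^ 2 + 108 * x2 * x3 ^ 2 * x4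
    - 27 * x3 ^ 4 - 8 * x4 ^ 3

theorem MvPolynomial.pderiv_ofNat {σ R : Type*} [CommSemiring R] (i : σ) (n : ℕ) [n.AtLeastTwo] :
    pderiv i (no_index (OfNat.ofNat n) : MvPolynomial σ R) = 0 := by
  rw [← map_ofNat (C : R →+* MvPolynomial σ R) n, pderiv_C]

theorem pderiv_x2_D : pderiv 0 D = -1296 * x2 ^ 2 * x3 ^ 2 + 72 * x2 * x4 ^ 2 + 108 * x3 ^ 2 * x4 := by
  simp only [D, x2, x3, x4, map_add, map_sub, map_neg, Derivation.leibniz, Derivation.leibniz_pow,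
    pderiv_X_self, pderiv_X_of_ne, pderiv_ofNat, ne_eq, Fin.reduceEq, not_false_eq_true, smul_eq_mul,
    nsmul_eq_mul]
  ring

theorem pderiv_x3_D : pderiv 1 D = -864 * x2 ^ 3 * x3 + 216 * x2 * x3 * x4 - 108 * x3 ^ 3 := by
  simp only [D, x2, x3, x4, map_add, map_sub, map_neg, Derivation.leibniz, Derivation.leibniz_pow,
    pderiv_X_self, pderiv_X_of_ne, pderiv_ofNat, ne_eq, Fin.reduceEq, not_false_eq_true, smul_eq_mul,
    nsmul_eq_mul]
  ring

theorem pderiv_x4_D : pderiv 2 D = 72 * x2 ^ 2 * x4 + 108 * x2 * x3 ^ 2 - 24 * x4 ^ 2 := by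
  simp only [D, x2, x3, x4, map_add, map_sub, map_neg, Derivation.leibniz, Derivation.leibniz_pow,
    pderiv_X_self, pderiv_X_of_ne, pderiv_ofNat, ne_eq, Fin.reduceEq, not_false_eq_true, smul_eq_mul,
    nsmul_eq_mul]
  ring

theorem C_two_thirds_mul_three : (C (2 / 3 : ℂ) : R3) * 3 = 2 := by
  rw [← map_ofNat C 3, ← map_ofNat C 2, ← map_mul]
  norm_num

theorem fields_tangent_to_discriminant :
    L0 D = 12 * D ∧ L1 D = 0 ∧ L2 D = 0 := by
  refine ⟨?_, ?_, ?_⟩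
  · rw [L0, pderiv_x2_D, pderiv_x3_D, pderiv_x4_D, D]
    ring
  · rw [L1, pderiv_x2_D, pderiv_x3_D, pderiv_x4_D]
    ring
  · rw [L2, pderiv_x2_D, pderiv_x3_D, pderiv_x4_D]
    -- `ring` treats `C (2/3)` as an atom; it multiplies `x₄ ∂D/∂x₂ = 3 x₄ (…)` below.
    linear_combination x4 * (-432 * x2 ^ 2 * x3 ^ 2 + 24 * x2 * x4 ^ 2 + 36 * x3 ^ 2 * x4) *
      C_two_thirds_mul_three

end
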